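/- Let G = (V,E) be a finite simple graph, let 0 ≤ α ≤ 1, and let O ⊆ V with |O| = k. Let w ∈ O and y ∈ V∖O with d(y) ≤ d(w), and set O' := (O∖{w}) ∪ {y}. Then cov_α(O') ≤ cov_α(O) + 2k. -/

import Mathlib

/-!
Both `m(S)` and `m(S, V ∖ S)` are governed by handshake counts:
`2 m(S) = ∑_{v ∈ S} |N(v) ∩ S|` and `m(S, V ∖ S) + 2 m(S) = ∑_{v ∈ S} d(v)`,
so `cov_α(S) = (1 - 3α) m(S) + α ∑_{v ∈ S} d(v)`. Adding a vertex `z` to `A` raises `m` by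
`|N(z) ∩ A|`, hence swapping `w` for `y` over `A = O ∖ {w}` changes `cov_α` by
`(1 - 3α)(|N(y) ∩ A| - |N(w) ∩ A|) + α (d(y) - d(w)) ≤ |1 - 3α| |A| ≤ 2 (k - 1)`.
-/

open Finset

/-- Number of edges of `G` with both endpoints in `X`. -/
noncomputable def mIn {V : Type*} (G : SimpleGraph V) (X : Finset V) : ℕ :=
  {e ∈ G.edgeSet | ∀ v ∈ e, v ∈ X}.ncard

/-- Number of edges of `G` with one endpoint in `X` and the other in `Y`. -/
noncomputable def mBtw {V : Type*} (G : SimpleGraph V) (X Y : Finset V) : ℕ :=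
  {e ∈ G.edgeSet | ∃ u ∈ X, ∃ w ∈ Y, e = s(u, w)}.ncard

/-- `cov_α(S) = (1-α)·m(S) + α·m(S, V∖S)`. -/
noncomputable def cov {V : Type*} [Fintype V] [DecidableEq V] (G : SimpleGraph V) (α : ℝ)
    (S : Finset V) : ℝ :=
  (1 - α) * mIn G S + α * mBtw G S Sᶜ

namespace SimpleGraph

variable {V : Type*} (G : SimpleGraph V) [Fintype V] [DecidableEq V] [DecidableRel G.Adj]

lemma degree_between_self (X : Finset V) (v : V) :
    (G.between X X).degree v = if v ∈ X then #(G.neighborFinset v ∩ X) else 0 := by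
  rw [← card_neighborFinset_eq_degree]
  split_ifs with hv
  · congr 1; ext u; simp [between_adj, hv]
  · rw [card_eq_zero]; ext u; simp [between_adj, hv]

lemma degree_between_compl_of_mem {X : Finset V} {v : V} (hv : v ∈ X) :
    (G.between X ↑Xᶜ).degree v = #(G.neighborFinset v ∩ Xᶜ) := by
  rw [← card_neighborFinset_eq_degree]
  congr 1; ext u; simp [between_adj, hv]

lemma card_neighborFinset_inter_insert {z : V} {A : Finset V} (hz : z ∉ A) (v : V) :
    #(G.neighborFinset v ∩ insert z A) =
      #(G.neighborFinset v ∩ A) + if G.Adj v z then 1 else 0 := by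
  by_cases h : G.Adj v z
  · rw [inter_insert_of_mem (by simpa using h), card_insert_of_notMem (by simp [hz]), if_pos h]
  · rw [inter_insert_of_notMem (by simpa using h), if_neg h, add_zero]

lemma sum_card_neighborFinset_inter_insert {z : V} {A : Finset V} (hz : z ∉ A) :
    ∑ v ∈ A, #(G.neighborFinset v ∩ insert z A) =
      ∑ v ∈ A, #(G.neighborFinset v ∩ A) + #(G.neighborFinset z ∩ A) := by
  rw [sum_congr rfl fun v _ => G.card_neighborFinset_inter_insert hz v, sum_add_distrib,
    ← card_filter]
  congr 2
  ext v
  simp [adj_comm, and_comm]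

end SimpleGraph

section EdgeCounts

open SimpleGraph

variable {V : Type*} (G : SimpleGraph V)

lemma mIn_eq_mBtw_self (X : Finset V) : mIn G X = mBtw G X X := by
  unfold mIn mBtw
  congr 1
  ext e
  induction e using Sym2.ind with
  | _ a b => simp only [Set.mem_ofPred_eq, mem_edgeSet, Sym2.mem_iff, Sym2.eq_iff]; aesop

variable [Fintype V] [DecidableEq V] [DecidableRel G.Adj]

lemma mBtw_eq_card_edgeFinset_between (X Y : Finset V) :
    mBtw G X Y = #(G.between X Y).edgeFinset := by
  rw [← Set.ncard_coe_finset, coe_edgeFinset, mBtw]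
  congr 1
  ext e
  induction e using Sym2.ind with
  | _ a b => simp only [Set.mem_ofPred_eq, mem_edgeSet, between_adj, Sym2.eq_iff]; aesop

lemma two_mul_mIn_eq_sum (X : Finset V) :
    2 * mIn G X = ∑ v ∈ X, #(G.neighborFinset v ∩ X) := by
  rw [mIn_eq_mBtw_self, mBtw_eq_card_edgeFinset_between, ← sum_degrees_eq_twice_card_edges,
    ← sum_filter_add_sum_filter_not univ (· ∈ X)]
  simp [degree_between_self]

lemma mBtw_compl_eq_sum (X : Finset V) :
    mBtw G X Xᶜ = ∑ v ∈ X, #(G.neighborFinset v ∩ Xᶜ) := by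
  have hbip : (G.between X ↑Xᶜ).IsBipartiteWith X ↑Xᶜ :=
    between_isBipartiteWith (by simpa using disjoint_compl_right)
  rw [mBtw_eq_card_edgeFinset_between, ← isBipartiteWith_sum_degrees_eq_card_edges hbip]
  exact sum_congr rfl fun v hv => G.degree_between_compl_of_mem hv

lemma mBtw_compl_add_two_mul_mIn (X : Finset V) :
    mBtw G X Xᶜ + 2 * mIn G X = ∑ v ∈ X, G.degree v := by
  rw [mBtw_compl_eq_sum, two_mul_mIn_eq_sum, ← sum_add_distrib]
  refine sum_congr rfl fun v _ => ?_
  rw [← card_neighborFinset_eq_degree, ← card_inter_add_card_sdiff (G.neighborFinset v) X,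
    sdiff_eq_inter_compl, add_comm]

lemma mIn_insert {z : V} {A : Finset V} (hz : z ∉ A) :
    mIn G (insert z A) = mIn G A + #(G.neighborFinset z ∩ A) := by
  have h := two_mul_mIn_eq_sum G (insert z A)
  rw [sum_insert hz, inter_insert_of_notMem (by simp), G.sum_card_neighborFinset_inter_insert hz,
    ← two_mul_mIn_eq_sum] at h
  omega

lemma cov_eq (α : ℝ) (S : Finset V) :
    cov G α S = (1 - 3 * α) * mIn G S + α * ∑ v ∈ S, (G.degree v : ℝ) := by
  have h : (mBtw G S Sᶜ : ℝ) + 2 * mIn G S = ∑ v ∈ S, (G.degree v : ℝ) := by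
    exact_mod_cast mBtw_compl_add_two_mul_mIn G S
  rw [cov, ← h]
  ring

lemma cov_insert (α : ℝ) {z : V} {A : Finset V} (hz : z ∉ A) :
    cov G α (insert z A) =
      cov G α A + (1 - 3 * α) * #(G.neighborFinset z ∩ A) + α * G.degree z := by
  rw [cov_eq, cov_eq, mIn_insert G hz, sum_insert hz]
  push_cast
  ring

lemma cov_insert_le_cov_insert_add {α : ℝ} (hα0 : 0 ≤ α) (hα1 : α ≤ 1) {y w : V}
    {A : Finset V} (hy : y ∉ A) (hw : w ∉ A) (hd : G.degree y ≤ G.degree w) :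
    cov G α (insert y A) ≤ cov G α (insert w A) + 2 * #A := by
  rw [cov_insert G α hy, cov_insert G α hw]
  have hny : (#(G.neighborFinset y ∩ A) : ℝ) ≤ #A := by
    exact_mod_cast card_le_card inter_subset_right
  have hnw : (#(G.neighborFinset w ∩ A) : ℝ) ≤ #A := by
    exact_mod_cast card_le_card inter_subset_right
  have hd' : α * G.degree y ≤ α * G.degree w :=
    mul_le_mul_of_nonneg_left (by exact_mod_cast hd) hα0
  -- the sign of `1 - 3α` decides which of the two neighbour counts is bounded by `#A`
  rcases le_total α (1 / 3) with h | h <;> nlinarith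

end EdgeCounts

theorem stmt3 {V : Type*} [Fintype V] [DecidableEq V] (G : SimpleGraph V)
    [DecidableRel G.Adj] (α : ℝ) (hα0 : 0 ≤ α) (hα1 : α ≤ 1)
    (k : ℕ) (O : Finset V) (hO : O.card = k)
    (w y : V) (hw : w ∈ O) (hy : y ∉ O) (hd : G.degree y ≤ G.degree w) :
    cov G α (insert y (O.erase w)) ≤ cov G α O + 2 * (k : ℝ) := by
  have hcard : ((O.erase w).card : ℝ) ≤ k := by
    exact_mod_cast hO ▸ card_erase_le
  calc cov G α (insert y (O.erase w))
      ≤ cov G α (insert w (O.erase w)) + 2 * (O.erase w).card :=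
        cov_insert_le_cov_insert_add G hα0 hα1 (fun h => hy (mem_of_mem_erase h))
          (notMem_erase w O) hd
    _ = cov G α O + 2 * (O.erase w).card := by rw [insert_erase hw]
    _ ≤ cov G α O + 2 * k := by linarith
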